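/- arXiv:1810.06539 — 11 statements merged into one kernel-verified Lean document; each statement's English description precedes it below -/
import Mathlib

section
/- Fix n ∈ ℕ and real numbers α₁, α₂, β₀, β₁, β₂, ε₀, and set ε₁ = n β₂. Let M be the (n+1) × (n+1) real matrix with rows and columns indexed by 0, …, n whose entries are M_{j,j} = j((j−1)α₂ + β₁) − ε₀, M_{j,j+1} = (j+1)(j α₁ + β₀), M_{j,j−1} = (j−1−n) β₂, and all other entries zero. Then there exists a nonzero real polynomial f of degree at most n satisfying r(α₂ r + α₁) f''(r) + (β₂ r² + β₁ r + β₀) f'(r) − (ε₁ r + ε₀) f(r) = 0 for all real r if and only if det M = 0. -/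
open Polynomial

namespace HeunAux

variable (α₁ α₂ β₀ β₁ β₂ ε₀ ε₁ : ℝ)

noncomputable def P (f : ℝ[X]) : ℝ[X] :=
  X * (C α₂ * X + C α₁) * derivative (derivative f)
    + (C β₂ * X ^ 2 + C β₁ * X + C β₀) * derivative f
    - (C ε₁ * X + C ε₀) * f

lemma eval_P (f : ℝ[X]) (r : ℝ) :
    (P α₁ α₂ β₀ β₁ β₂ ε₀ ε₁ f).eval r =
      r * (α₂ * r + α₁) * (derivative (derivative f)).eval r
        + (β₂ * r ^ 2 + β₁ * r + β₀) * (derivative f).eval r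
        - (ε₁ * r + ε₀) * f.eval r := by
  simp [P]

lemma coeff_P (f : ℝ[X]) (i : ℕ) :
    (P α₁ α₂ β₀ β₁ β₂ ε₀ ε₁ f).coeff i =
      (if i = 0 then 0 else (((i:ℝ) - 1) * β₂ - ε₁) * f.coeff (i - 1))
      + ((i:ℝ) * (((i:ℝ) - 1) * α₂ + β₁) - ε₀) * f.coeff i
      + ((i:ℝ) + 1) * ((i:ℝ) * α₁ + β₀) * f.coeff (i + 1) := by
  have hP : P α₁ α₂ β₀ β₁ β₂ ε₀ ε₁ f =
      C α₂ * (derivative (derivative f) * X ^ 2)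
      + C α₁ * (derivative (derivative f) * X ^ 1)
      + C β₂ * (derivative f * X ^ 2)
      + C β₁ * (derivative f * X ^ 1)
      + C β₀ * derivative f
      - C ε₁ * (f * X ^ 1) - C ε₀ * f := by
    unfold P; ring
  rw [hP]
  simp only [coeff_add, coeff_sub, coeff_C_mul, coeff_mul_X_pow']
  match i with
  | 0 => simp [coeff_derivative]; ring
  | 1 => simp [coeff_derivative]; ring
  | (k+2) =>
    simp only [coeff_derivative, show 2 ≤ k + 2 by omega, show 1 ≤ k + 2 by omega,
      if_true, if_pos, Nat.add_sub_cancel, show k + 2 - 1 = k + 1 by omega,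
      show k + 2 - 2 = k by omega, show (k:ℕ) + 2 ≠ 0 by omega, if_neg]
    push_cast
    ring

lemma fin_sum_ite (n : ℕ) (v : Fin (n + 1) → ℝ) (k : ℕ) :
    (∑ j : Fin (n + 1), if (j : ℕ) = k then v j else 0) =
      if h : k < n + 1 then v ⟨k, h⟩ else 0 := by
  by_cases h : k < n + 1
  · rw [dif_pos h, Finset.sum_eq_single (⟨k, h⟩ : Fin (n + 1))]
    · simp
    · intro b _ hb
      have : (b : ℕ) ≠ k := fun h' => hb (Fin.ext h')
      rw [if_neg this]
    · simp
  · rw [dif_neg h, Finset.sum_eq_zero]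
    intro b _
    have : (b : ℕ) ≠ k := by omega
    rw [if_neg this]

lemma mulVec_eq {n : ℕ} (M : Matrix (Fin (n + 1)) (Fin (n + 1)) ℝ)
    (hM : ∀ i j : Fin (n + 1), M i j =
      if (i : ℕ) = (j : ℕ) then (i : ℝ) * (((i : ℝ) - 1) * α₂ + β₁) - ε₀
      else if (j : ℕ) = (i : ℕ) + 1 then ((i : ℝ) + 1) * ((i : ℝ) * α₁ + β₀)
      else if (i : ℕ) = (j : ℕ) + 1 then ((i : ℝ) - 1 - (n : ℝ)) * β₂
      else 0)
    (v : Fin (n + 1) → ℝ) (i : Fin (n + 1)) :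
    M.mulVec v i =
      (if (i : ℕ) = 0 then 0 else ((i:ℝ) - 1 - (n:ℝ)) * β₂ *
        (if h : (i : ℕ) - 1 < n + 1 then v ⟨(i : ℕ) - 1, h⟩ else 0))
      + ((i:ℝ) * (((i:ℝ) - 1) * α₂ + β₁) - ε₀) * v i
      + ((i:ℝ) + 1) * ((i:ℝ) * α₁ + β₀) *
        (if h : (i : ℕ) + 1 < n + 1 then v ⟨(i : ℕ) + 1, h⟩ else 0) := by
  have key : ∀ j : Fin (n + 1), M i j * v j =
      (if (j : ℕ) = (i : ℕ) then ((i:ℝ) * (((i:ℝ) - 1) * α₂ + β₁) - ε₀) * v j else 0)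
      + (if (j : ℕ) = (i : ℕ) + 1 then ((i:ℝ) + 1) * ((i:ℝ) * α₁ + β₀) * v j else 0)
      + (if (i : ℕ) = (j : ℕ) + 1 then ((i:ℝ) - 1 - (n:ℝ)) * β₂ * v j else 0) := by
    intro j
    rw [hM i j]
    by_cases h1 : (i : ℕ) = (j : ℕ)
    · have h2 : ¬((j : ℕ) = (i : ℕ) + 1) := by omega
      have h3 : ¬((i : ℕ) = (j : ℕ) + 1) := by omega
      simp only [if_pos h1, if_pos h1.symm, if_neg h2, if_neg h3]
      ring
    · have h1' : ¬((j : ℕ) = (i : ℕ)) := by omega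
      by_cases h2 : (j : ℕ) = (i : ℕ) + 1
      · have h3 : ¬((i : ℕ) = (j : ℕ) + 1) := by omega
        simp only [if_neg h1, if_neg h1', if_pos h2, if_neg h3]
        ring
      · by_cases h3 : (i : ℕ) = (j : ℕ) + 1
        · simp only [if_neg h1, if_neg h1', if_neg h2, if_pos h3]
          ring
        · simp only [if_neg h1, if_neg h1', if_neg h2, if_neg h3]
          ring
  have hsum : M.mulVec v i = ∑ j : Fin (n + 1), M i j * v j := by
    simp [Matrix.mulVec, dotProduct]
  rw [hsum, Finset.sum_congr rfl (fun j _ => key j), Finset.sum_add_distrib,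
    Finset.sum_add_distrib]
  have S1 : (∑ j : Fin (n + 1),
      if (j : ℕ) = (i : ℕ) then ((i:ℝ) * (((i:ℝ) - 1) * α₂ + β₁) - ε₀) * v j else 0)
      = ((i:ℝ) * (((i:ℝ) - 1) * α₂ + β₁) - ε₀) * v i := by
    rw [fin_sum_ite n (fun j => ((i:ℝ) * (((i:ℝ) - 1) * α₂ + β₁) - ε₀) * v j) (i : ℕ),
      dif_pos i.isLt]
  have S2 : (∑ j : Fin (n + 1),
      if (j : ℕ) = (i : ℕ) + 1 then ((i:ℝ) + 1) * ((i:ℝ) * α₁ + β₀) * v j else 0)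
      = ((i:ℝ) + 1) * ((i:ℝ) * α₁ + β₀) *
        (if h : (i : ℕ) + 1 < n + 1 then v ⟨(i : ℕ) + 1, h⟩ else 0) := by
    rw [fin_sum_ite n (fun j => ((i:ℝ) + 1) * ((i:ℝ) * α₁ + β₀) * v j) ((i : ℕ) + 1)]
    by_cases h : (i : ℕ) + 1 < n + 1
    · rw [dif_pos h, dif_pos h]
    · rw [dif_neg h, dif_neg h, mul_zero]
  have S3 : (∑ j : Fin (n + 1),
      if (i : ℕ) = (j : ℕ) + 1 then ((i:ℝ) - 1 - (n:ℝ)) * β₂ * v j else 0)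
      = (if (i : ℕ) = 0 then 0 else ((i:ℝ) - 1 - (n:ℝ)) * β₂ *
        (if h : (i : ℕ) - 1 < n + 1 then v ⟨(i : ℕ) - 1, h⟩ else 0)) := by
    by_cases hi : (i : ℕ) = 0
    · rw [if_pos hi, Finset.sum_eq_zero]
      intro j _
      rw [if_neg (by omega)]
    · rw [if_neg hi]
      have : ∀ j : Fin (n + 1), ((i : ℕ) = (j : ℕ) + 1) = ((j : ℕ) = (i : ℕ) - 1) := by
        intro j; apply propext; omega
      simp_rw [this]
      rw [fin_sum_ite n (fun j => ((i:ℝ) - 1 - (n:ℝ)) * β₂ * v j) ((i : ℕ) - 1)]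
      have h : (i : ℕ) - 1 < n + 1 := by omega
      rw [dif_pos h, dif_pos h]
  rw [S1, S2, S3]
  ring

lemma mulVec_coeff {n : ℕ} (hε₁ : ε₁ = (n : ℝ) * β₂)
    (M : Matrix (Fin (n + 1)) (Fin (n + 1)) ℝ)
    (hM : ∀ i j : Fin (n + 1), M i j =
      if (i : ℕ) = (j : ℕ) then (i : ℝ) * (((i : ℝ) - 1) * α₂ + β₁) - ε₀
      else if (j : ℕ) = (i : ℕ) + 1 then ((i : ℝ) + 1) * ((i : ℝ) * α₁ + β₀)
      else if (i : ℕ) = (j : ℕ) + 1 then ((i : ℝ) - 1 - (n : ℝ)) * β₂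
      else 0)
    (f : ℝ[X]) (hf : f.natDegree ≤ n) (i : Fin (n + 1)) :
    M.mulVec (fun j => f.coeff (j : ℕ)) i = (P α₁ α₂ β₀ β₁ β₂ ε₀ ε₁ f).coeff (i : ℕ) := by
  rw [mulVec_eq α₁ α₂ β₀ β₁ β₂ ε₀ M hM, coeff_P]
  have hi := i.isLt
  have h1 : (i : ℕ) - 1 < n + 1 := by omega
  rw [dif_pos h1]
  have hc1 : f.coeff ((i : ℕ) + 1) =
      (if h : (i : ℕ) + 1 < n + 1 then f.coeff ((i : ℕ) + 1) else 0) := by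
    by_cases h : (i : ℕ) + 1 < n + 1
    · rw [dif_pos h]
    · rw [dif_neg h, coeff_eq_zero_of_natDegree_lt]
      omega
  rw [← hc1]
  by_cases hi0 : (i : ℕ) = 0
  · rw [if_pos hi0, if_pos hi0]
  · rw [if_neg hi0, if_neg hi0, hε₁]
    ring

end HeunAux

open HeunAux

/-- There exists a nonzero polynomial solution of degree at most `n` of the
generalized confluent Heun equation (with `ε₁ = n β₂`) if and only if the
determinant of the associated Jacobi tridiagonal matrix vanishes. -/
theorem heun_polynomial_solution_iff_det_eq_zero
    (n : ℕ) (α₁ α₂ β₀ β₁ β₂ ε₀ ε₁ : ℝ) (hε₁ : ε₁ = (n : ℝ) * β₂)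
    (M : Matrix (Fin (n + 1)) (Fin (n + 1)) ℝ)
    (hM : ∀ i j : Fin (n + 1), M i j =
      if (i : ℕ) = (j : ℕ) then (i : ℝ) * (((i : ℝ) - 1) * α₂ + β₁) - ε₀
      else if (j : ℕ) = (i : ℕ) + 1 then ((i : ℝ) + 1) * ((i : ℝ) * α₁ + β₀)
      else if (i : ℕ) = (j : ℕ) + 1 then ((i : ℝ) - 1 - (n : ℝ)) * β₂
      else 0) :
    (∃ f : Polynomial ℝ, f ≠ 0 ∧ f.natDegree ≤ n ∧
      ∀ r : ℝ,
        r * (α₂ * r + α₁) * (derivative (derivative f)).eval r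
          + (β₂ * r ^ 2 + β₁ * r + β₀) * (derivative f).eval r
          - (ε₁ * r + ε₀) * f.eval r = 0)
    ↔ M.det = 0 := by
  constructor
  · rintro ⟨f, hf0, hdeg, heval⟩
    have hPf : P α₁ α₂ β₀ β₁ β₂ ε₀ ε₁ f = 0 := by
      apply Polynomial.funext
      intro r
      rw [eval_P, eval_zero]
      exact heval r
    refine Matrix.exists_mulVec_eq_zero_iff.mp ⟨fun j => f.coeff (j : ℕ), ?_, ?_⟩
    · intro hv0
      apply hf0
      ext k
      rw [coeff_zero]
      by_cases hk : k < n + 1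
      · have := congrFun hv0 ⟨k, hk⟩
        simpa using this
      · exact coeff_eq_zero_of_natDegree_lt (lt_of_le_of_lt hdeg (by omega))
    · funext i
      rw [mulVec_coeff α₁ α₂ β₀ β₁ β₂ ε₀ ε₁ hε₁ M hM f hdeg i, hPf]
      simp
  · intro hdet
    obtain ⟨v, hv0, hv⟩ := Matrix.exists_mulVec_eq_zero_iff.mpr hdet
    set f : ℝ[X] := ∑ j : Fin (n + 1), C (v j) * X ^ (j : ℕ) with hf
    have hcoeff : ∀ k : ℕ, f.coeff k = if h : k < n + 1 then v ⟨k, h⟩ else 0 := by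
      intro k
      rw [hf, finset_sum_coeff]
      simp only [coeff_C_mul, coeff_X_pow, mul_ite, mul_one, mul_zero]
      have e : ∀ x : Fin (n + 1), (k = (x : ℕ)) = ((x : ℕ) = k) := fun x => propext eq_comm
      simp_rw [e]
      exact fin_sum_ite n v k
    have hdeg : f.natDegree ≤ n := by
      rw [Polynomial.natDegree_le_iff_coeff_eq_zero]
      intro N hN
      rw [hcoeff N, dif_neg (by omega)]
    have hveq : (fun j : Fin (n + 1) => f.coeff (j : ℕ)) = v := by
      funext j
      rw [hcoeff (j : ℕ), dif_pos j.isLt]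
    have hPf : P α₁ α₂ β₀ β₁ β₂ ε₀ ε₁ f = 0 := by
      ext k
      rw [coeff_zero]
      by_cases hk : k < n + 1
      · have h1 := mulVec_coeff α₁ α₂ β₀ β₁ β₂ ε₀ ε₁ hε₁ M hM f hdeg ⟨k, hk⟩
        rw [hveq] at h1
        rw [← h1]
        exact congrFun hv ⟨k, hk⟩
      · rw [coeff_P]
        have e1 : f.coeff k = 0 := by rw [hcoeff k, dif_neg (by omega)]
        have e2 : f.coeff (k + 1) = 0 := by rw [hcoeff (k + 1), dif_neg (by omega)]
        rw [if_neg (by omega : ¬ k = 0), e1, e2]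
        by_cases hk1 : k = n + 1
        · subst hk1
          rw [hε₁]
          push_cast
          ring
        · have e3 : f.coeff (k - 1) = 0 := by rw [hcoeff (k - 1), dif_neg (by omega)]
          rw [e3]
          ring
    refine ⟨f, ?_, hdeg, ?_⟩
    · intro h0
      apply hv0
      rw [← hveq]
      funext j
      simp [h0]
    · intro r
      have := eval_P α₁ α₂ β₀ β₁ β₂ ε₀ ε₁ f r
      rw [hPf, eval_zero] at this
      linarith [this]
end

section
/- Let α₁, α₂, β₀, β₁, β₂, ε₀ be real numbers with β₀ ≠ 0 and α₁ + β₀ ≠ 0, and set ε₁ = 2β₂. Then the polynomial f(r) = 1 + (ε₀/β₀) r + ((ε₀² − β₁ ε₀ + 2 β₂ β₀)/(2 β₀ (β₀ + α₁))) r² satisfies r(α₂ r + α₁) f''(r) + (β₂ r² + β₁ r + β₀) f'(r) − (ε₁ r + ε₀) f(r) = 0 for all real r if and only if ε₀³ − (2α₂ + 3β₁) ε₀² + 2(β₁(α₂ + β₁) + β₂(α₁ + 2β₀)) ε₀ − 4 β₀ β₂ (α₂ + β₁) = 0. -/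
/-- The degree-two polynomial
`f(r) = 1 + (ε₀/β₀) r + ((ε₀² − β₁ ε₀ + 2β₂β₀)/(2β₀(β₀+α₁))) r²`
solves the generalized confluent Heun equation with `ε₁ = 2β₂` if and only if
`ε₀³ − (2α₂+3β₁) ε₀² + 2(β₁(α₂+β₁)+β₂(α₁+2β₀)) ε₀ − 4β₀β₂(α₂+β₁) = 0`. -/
theorem heun_degree_two_solution_iff
    (α₁ α₂ β₀ β₁ β₂ ε₀ : ℝ) (hβ₀ : β₀ ≠ 0) (hα₁β₀ : α₁ + β₀ ≠ 0)
    (ε₁ : ℝ) (hε₁ : ε₁ = 2 * β₂)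
    (f : ℝ → ℝ)
    (hf : ∀ r : ℝ, f r = 1 + (ε₀ / β₀) * r
      + ((ε₀ ^ 2 - β₁ * ε₀ + 2 * β₂ * β₀) / (2 * β₀ * (β₀ + α₁))) * r ^ 2) :
    (∀ r : ℝ,
      r * (α₂ * r + α₁) * deriv (deriv f) r
        + (β₂ * r ^ 2 + β₁ * r + β₀) * deriv f r
        - (ε₁ * r + ε₀) * f r = 0)
    ↔ ε₀ ^ 3 - (2 * α₂ + 3 * β₁) * ε₀ ^ 2
        + 2 * (β₁ * (α₂ + β₁) + β₂ * (α₁ + 2 * β₀)) * ε₀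
        - 4 * β₀ * β₂ * (α₂ + β₁) = 0 := by
  set a : ℝ := ε₀ / β₀ with ha
  set C : ℝ := (ε₀ ^ 2 - β₁ * ε₀ + 2 * β₂ * β₀) / (2 * β₀ * (β₀ + α₁)) with hC
  have hfg : f = fun r : ℝ => 1 + a * r + C * r ^ 2 := funext hf
  have hd1 : ∀ r : ℝ, HasDerivAt f (a + C * (2 * r)) r := by
    intro r
    rw [hfg]
    have h1 : HasDerivAt (fun r : ℝ => 1 + a * r + C * r ^ 2)
        (0 + a * 1 + C * (↑2 * r ^ (2 - 1))) r :=
      (((hasDerivAt_const r (1 : ℝ)).add ((hasDerivAt_id r).const_mul a)).add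
        ((hasDerivAt_pow 2 r).const_mul C))
    simpa using h1
  have hdf : deriv f = fun r : ℝ => a + 2 * C * r := by
    funext r
    have := (hd1 r).deriv
    rw [this]; ring
  have hd2 : ∀ r : ℝ, deriv (deriv f) r = 2 * C := by
    intro r
    rw [hdf]
    have h1 : HasDerivAt (fun r : ℝ => a + 2 * C * r) (0 + 2 * C * 1) r :=
      (hasDerivAt_const r a).add ((hasDerivAt_id r).const_mul (2 * C))
    simpa using h1.deriv
  have hβ₀' : β₀ + α₁ ≠ 0 := by
    intro h; exact hα₁β₀ (by linarith)
  -- key identity: the LHS is K * r^2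
  have key : ∀ r : ℝ,
      r * (α₂ * r + α₁) * deriv (deriv f) r
        + (β₂ * r ^ 2 + β₁ * r + β₀) * deriv f r
        - (ε₁ * r + ε₀) * f r
      = -(ε₀ ^ 3 - (2 * α₂ + 3 * β₁) * ε₀ ^ 2
        + 2 * (β₁ * (α₂ + β₁) + β₂ * (α₁ + 2 * β₀)) * ε₀
        - 4 * β₀ * β₂ * (α₂ + β₁)) / (2 * β₀ * (β₀ + α₁)) * r ^ 2 := by
    intro r
    rw [hd2, hdf, hfg, hε₁, ha, hC]
    field_simp
    ring
  constructor
  · intro h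
    have h1 := h 1
    rw [key 1] at h1
    have h2 : -(ε₀ ^ 3 - (2 * α₂ + 3 * β₁) * ε₀ ^ 2
        + 2 * (β₁ * (α₂ + β₁) + β₂ * (α₁ + 2 * β₀)) * ε₀
        - 4 * β₀ * β₂ * (α₂ + β₁)) = 0 := by
      have hD : (2 * β₀ * (β₀ + α₁)) ≠ 0 := by positivity
      field_simp at h1
      linarith [h1]
    linarith
  · intro h r
    rw [key r, h]
    simp
end

section
/- Fix n ∈ ℕ, a real number ζ, and real parameters α₁, α₂, β₀, β₁, β₂ with α₁ ≠ 0 and (j−1)α₁ + β₀ ≠ 0 for all j = 1, …, n. Let C₋₁ = 0, C₀ = 1, and for j = 0, …, n−1 let C_{j+1} be determined by the recurrence (j+1)(j α₁ + β₀) C_{j+1} + (j(j−1)α₂ + j β₁ − ζ) C_j + ((j−1)β₂ − n β₂) C_{j−1} = 0. Then for every j = 0, …, n one has C_j = P_j(ζ) / (j! · α₁^j · (β₀/α₁)_j), where P_j are the polynomials defined by P_{−1} = 0, P_0 = 1, P_{j+1}(ζ) = (ζ − j(j−1)α₂ − j β₁) P_j(ζ) + j(n+1−j) β₂ ((j−1)α₁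 + β₀) P_{j−1}(ζ). -/
/-- The coefficients `C_j` of the polynomial solution of the generalized confluent Heun
equation, generated by the three-term recurrence, are given explicitly by
`C_j = P_j(ζ) / (j! α₁^j (β₀/α₁)_j)` where the `P_j` satisfy their own recurrence. -/
theorem heun_coefficients_eq_orthogonal_polynomials
    (n : ℕ) (ζ : ℝ) (α₁ α₂ β₀ β₁ β₂ : ℝ) (hα₁ : α₁ ≠ 0)
    (hβ₀ : ∀ j : ℕ, 1 ≤ j → j ≤ n → ((j : ℝ) - 1) * α₁ + β₀ ≠ 0)
    (C : ℤ → ℝ) (hCneg : C (-1) = 0) (hC0 : C 0 = 1)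
    (hCrec : ∀ j : ℕ, j < n →
      ((j : ℝ) + 1) * ((j : ℝ) * α₁ + β₀) * C ((j : ℤ) + 1)
        + ((j : ℝ) * ((j : ℝ) - 1) * α₂ + (j : ℝ) * β₁ - ζ) * C (j : ℤ)
        + (((j : ℝ) - 1) * β₂ - (n : ℝ) * β₂) * C ((j : ℤ) - 1) = 0)
    (P : ℤ → ℝ) (hPneg : P (-1) = 0) (hP0 : P 0 = 1)
    (hPrec : ∀ j : ℕ, P ((j : ℤ) + 1) =
      (ζ - (j : ℝ) * ((j : ℝ) - 1) * α₂ - (j : ℝ) * β₁) * P (j : ℤ)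
        + (j : ℝ) * ((n : ℝ) + 1 - (j : ℝ)) * β₂ * (((j : ℝ) - 1) * α₁ + β₀) * P ((j : ℤ) - 1)) :
    ∀ j : ℕ, j ≤ n →
      C (j : ℤ) = P (j : ℤ) /
        ((j.factorial : ℝ) * α₁ ^ j * (ascPochhammer ℝ j).eval (β₀ / α₁)) := by
  set D : ℕ → ℝ := fun j => (j.factorial : ℝ) * α₁ ^ j * (ascPochhammer ℝ j).eval (β₀ / α₁)
    with hD
  have hD0 : D 0 = 1 := by simp [hD]
  have hβ₀' : ∀ j : ℕ, j + 1 ≤ n → (j : ℝ) * α₁ + β₀ ≠ 0 := by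
    intro j hj
    have h := hβ₀ (j + 1) (by omega) hj
    intro hc
    apply h
    push_cast
    linear_combination hc
  have hDsucc : ∀ j : ℕ, D (j + 1) = ((j : ℝ) + 1) * ((j : ℝ) * α₁ + β₀) * D j := by
    intro j
    simp only [hD, Nat.factorial_succ, pow_succ, ascPochhammer_succ_right, Polynomial.eval_mul,
      Polynomial.eval_add, Polynomial.eval_X, Polynomial.eval_natCast]
    push_cast
    field_simp
    ring
  have hDne : ∀ j : ℕ, j ≤ n → D j ≠ 0 := by
    intro j
    induction j with
    | zero => intro _; rw [hD0]; norm_num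
    | succ k ihk =>
      intro hk
      rw [hDsucc]
      exact mul_ne_zero (mul_ne_zero (by positivity) (hβ₀' k hk)) (ihk (by omega))
  have key : ∀ j : ℕ, j ≤ n → D j * C (j : ℤ) = P (j : ℤ) := by
    intro j
    induction j using Nat.strong_induction_on with
    | _ j ih =>
      match j with
      | 0 =>
        intro _
        rw [hD0]
        push_cast
        rw [hC0, hP0]
        norm_num
      | 1 =>
        intro h1
        have hrec := hCrec 0 (by omega)
        have hp := hPrec 0
        push_cast at hrec hp ⊢
        norm_num at hrec hp
        rw [hDsucc 0, hD0]
        push_cast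
        linear_combination hrec + ζ * hC0 + (β₂ + (n : ℝ) * β₂) * hCneg - hp - ζ * hP0
      | (k + 2) =>
        intro hkn
        have h1 : D (k + 1) * C ((k : ℤ) + 1) = P ((k : ℤ) + 1) := by
          have := ih (k + 1) (by omega) (by omega)
          push_cast at this
          exact this
        have h0 : D k * C (k : ℤ) = P (k : ℤ) := ih k (by omega) (by omega)
        have hrec := hCrec (k + 1) (by omega)
        have hp := hPrec (k + 1)
        have e1 : ((k + 1 : ℕ) : ℤ) + 1 = ((k : ℤ) + 2) := by push_cast; ring
        have e2 : ((k + 1 : ℕ) : ℤ) - 1 = ((k : ℤ)) := by push_cast; ring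
        have e3 : ((k + 1 : ℕ) : ℤ) = ((k : ℤ) + 1) := by push_cast; ring
        rw [e1, e2, e3] at hrec hp
        show D (k + 2) * C ((k : ℤ) + 2) = P ((k : ℤ) + 2)
        push_cast at hrec hp
        have hd2 : D (k + 2) = ((k : ℝ) + 1 + 1) * (((k : ℝ) + 1) * α₁ + β₀) * D (k + 1) := by
          rw [hDsucc (k + 1)]; push_cast; ring
        have hd1 : D (k + 1) = ((k : ℝ) + 1) * ((k : ℝ) * α₁ + β₀) * D k := hDsucc k
        linear_combination C ((k : ℤ) + 2) * hd2 + D (k + 1) * hrec - hp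
          - (((k : ℝ) + 1) * ((k : ℝ) + 1 - 1) * α₂ + ((k : ℝ) + 1) * β₁ - ζ) * h1
          + (((k : ℝ) + 1) * ((n : ℝ) + 1 - ((k : ℝ) + 1)) * β₂ * (((k : ℝ) + 1 - 1) * α₁ + β₀)) * h0
          + (((n : ℝ) - (k : ℝ)) * β₂ * C (k : ℤ)) * hd1
  intro j hj
  have hk := key j hj
  have hne := hDne j hj
  simp only [hD] at hk hne
  rw [eq_div_iff hne]
  linear_combination hk
end

section
/- Fix n ∈ ℕ with n ≥ 2 and real parameters α₁, α₂, β₀, β₁, β₂ with α₁ ≠ 0 and β₂ ≠ 0, and let P_j be the polynomials defined by P_{−1} = 0, P_0 = 1, P_{j+1}(ζ) = (ζ − j(j−1)α₂ − j β₁) P_j(ζ) + j(n+1−j) β₂ ((j−1)α₁ + β₀) P_{j−1}(ζ). Assume (β₀/α₁)_j ≠ 0 for 1 ≤ j ≤ m where 1 ≤ m ≤ n−1. Then for all real ζ₁ ≠ ζ₂: Σ_{j=0}^{m} P_j(ζ₁) P_j(ζ₂) / (j! (β₂ α₁)^j (β₀/α₁)_j (−n)_j) = (P_{m+1}(ζ₁)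 P_m(ζ₂) − P_m(ζ₁) P_{m+1}(ζ₂)) / (m! (β₂ α₁)^m (β₀/α₁)_m (−n)_m (ζ₁ − ζ₂)). -/
open Polynomial

lemma asc_neg_ne (n : ℕ) : ∀ k : ℕ, k ≤ n → (ascPochhammer ℝ k).eval (-(n : ℝ)) ≠ 0 := by
  intro k
  induction k with
  | zero => simp
  | succ k ih =>
    intro hk
    rw [ascPochhammer_succ_eval]
    refine mul_ne_zero (ih (by omega)) ?_
    have : (k : ℝ) < n := by exact_mod_cast (by omega : k < n)
    intro h; nlinarith

/-- Christoffel–Darboux formula for the finite sequence of orthogonal polynomials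
attached to the generalized confluent Heun equation. -/
theorem heun_christoffel_darboux
    (n : ℕ) (hn : 2 ≤ n) (α₁ α₂ β₀ β₁ β₂ : ℝ) (hα₁ : α₁ ≠ 0) (hβ₂ : β₂ ≠ 0)
    (P : ℕ → Polynomial ℝ) (hP0 : P 0 = 1) (hP1 : P 1 = X)
    (hPrec : ∀ j : ℕ, 1 ≤ j → P (j + 1) =
      (X - C ((j : ℝ) * ((j : ℝ) - 1) * α₂ + (j : ℝ) * β₁)) * P j
        + C ((j : ℝ) * ((n : ℝ) + 1 - (j : ℝ)) * β₂ * (((j : ℝ) - 1) * α₁ + β₀)) * P (j - 1))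
    (m : ℕ) (hm1 : 1 ≤ m) (hmn : m ≤ n - 1)
    (hpoch : ∀ j : ℕ, 1 ≤ j → j ≤ m → (ascPochhammer ℝ j).eval (β₀ / α₁) ≠ 0)
    (ζ₁ ζ₂ : ℝ) (hζ : ζ₁ ≠ ζ₂) :
    ∑ j ∈ Finset.range (m + 1),
      (P j).eval ζ₁ * (P j).eval ζ₂ /
        ((j.factorial : ℝ) * (β₂ * α₁) ^ j * (ascPochhammer ℝ j).eval (β₀ / α₁)
          * (ascPochhammer ℝ j).eval (-(n : ℝ)))
    = ((P (m + 1)).eval ζ₁ * (P m).eval ζ₂ - (P m).eval ζ₁ * (P (m + 1)).eval ζ₂) /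
        ((m.factorial : ℝ) * (β₂ * α₁) ^ m * (ascPochhammer ℝ m).eval (β₀ / α₁)
          * (ascPochhammer ℝ m).eval (-(n : ℝ)) * (ζ₁ - ζ₂)) := by
  have hζ' : ζ₁ - ζ₂ ≠ 0 := sub_ne_zero.mpr hζ
  clear hm1
  induction m with
  | zero =>
    simp [hP0, hP1, Finset.sum_range_one, div_self hζ']
  | succ k ih =>
    have hkn : k ≤ n - 1 := by omega
    have hpk : ∀ j : ℕ, 1 ≤ j → j ≤ k → (ascPochhammer ℝ j).eval (β₀ / α₁) ≠ 0 :=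
      fun j h1 h2 => hpoch j h1 (by omega)
    have ih' := ih hkn hpk
    -- notation
    set A₁ := (P (k + 1)).eval ζ₁ with hA₁
    set A₂ := (P (k + 1)).eval ζ₂ with hA₂
    set a₁ := (P k).eval ζ₁ with ha₁
    set a₂ := (P k).eval ζ₂ with ha₂
    set Hk := ((k.factorial : ℝ) * (β₂ * α₁) ^ k * (ascPochhammer ℝ k).eval (β₀ / α₁)
          * (ascPochhammer ℝ k).eval (-(n : ℝ))) with hHk
    -- nonvanishing of Hk
    have hpochk : (ascPochhammer ℝ k).eval (β₀ / α₁) ≠ 0 := by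
      rcases Nat.eq_zero_or_pos k with h | h
      · subst h; simp
      · exact hpk k h le_rfl
    have hnegk : (ascPochhammer ℝ k).eval (-(n : ℝ)) ≠ 0 := asc_neg_ne n k (by omega)
    have hHk0 : Hk ≠ 0 := by
      refine mul_ne_zero (mul_ne_zero (mul_ne_zero ?_ ?_) hpochk) hnegk
      · exact_mod_cast k.factorial_ne_zero
      · exact pow_ne_zero _ (mul_ne_zero hβ₂ hα₁)
    set c : ℝ := ((k : ℝ) + 1) * ((n : ℝ) + 1 - ((k : ℝ) + 1)) * β₂ * ((k : ℝ) * α₁ + β₀)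
      with hc
    -- H (k+1) = -c * Hk
    have hH1 : ((k + 1).factorial : ℝ) * (β₂ * α₁) ^ (k + 1)
        * (ascPochhammer ℝ (k + 1)).eval (β₀ / α₁)
        * (ascPochhammer ℝ (k + 1)).eval (-(n : ℝ)) = -c * Hk := by
      rw [ascPochhammer_succ_eval, ascPochhammer_succ_eval, Nat.factorial_succ, hHk, hc]
      push_cast
      field_simp
      ring
    have hpoch1 : (ascPochhammer ℝ (k + 1)).eval (β₀ / α₁) ≠ 0 :=
      hpoch (k + 1) (by omega) le_rfl
    have hneg1 : (ascPochhammer ℝ (k + 1)).eval (-(n : ℝ)) ≠ 0 := asc_neg_ne n (k + 1) (by omega)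
    have hLHS : ((k + 1).factorial : ℝ) * (β₂ * α₁) ^ (k + 1)
        * (ascPochhammer ℝ (k + 1)).eval (β₀ / α₁)
        * (ascPochhammer ℝ (k + 1)).eval (-(n : ℝ)) ≠ 0 := by
      refine mul_ne_zero (mul_ne_zero (mul_ne_zero ?_ ?_) hpoch1) hneg1
      · exact_mod_cast (k + 1).factorial_ne_zero
      · exact pow_ne_zero _ (mul_ne_zero hβ₂ hα₁)
    have hc0 : c ≠ 0 := by
      intro h
      rw [hH1, h] at hLHS
      simp at hLHS
    -- recurrence at j = k+1
    have hrec := hPrec (k + 1) (by omega)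
    have hE1 : (P (k + 1 + 1)).eval ζ₁
        = (ζ₁ - (((k : ℝ) + 1) * (((k : ℝ) + 1) - 1) * α₂ + ((k : ℝ) + 1) * β₁)) * A₁
          + c * a₁ := by
      rw [hrec]; simp [hc]; try push_cast; try ring
    have hE2 : (P (k + 1 + 1)).eval ζ₂
        = (ζ₂ - (((k : ℝ) + 1) * (((k : ℝ) + 1) - 1) * α₂ + ((k : ℝ) + 1) * β₁)) * A₂
          + c * a₂ := by
      rw [hrec]; simp [hc]; try push_cast; try ring
    rw [Finset.sum_range_succ, ih', hE1, hE2, hH1]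
    field_simp
    ring
end

section
/- Fix n ∈ ℕ with n ≥ 2 and real parameters α₁, α₂, β₀, β₁, β₂ with α₁ ≠ 0 and β₂ ≠ 0, and let P_j ∈ ℝ[ζ] be the polynomials defined by P_{−1} = 0, P_0 = 1, P_{j+1}(ζ) = (ζ − j(j−1)α₂ − j β₁) P_j(ζ) + j(n+1−j) β₂ ((j−1)α₁ + β₀) P_{j−1}(ζ). Assume (β₀/α₁)_j ≠ 0 for 1 ≤ j ≤ m where 1 ≤ m ≤ n−1. Then for every real ζ: Σ_{j=0}^{m} P_j(ζ)² / (j! (β₂ α₁)^j (β₀/α₁)_j (−n)_j) = (P_{m+1}'(ζ) P_m(ζ) − P_m'(ζ) P_{m+1}(ζ)) / (m! (β₂ α₁)^m (β₀/α₁)_m (−n)_m), where P' denotes the derivative of the polynomial P with respect to ζ. -/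
/-!
For a three-term recurrence `P (j + 1) = (X - c j) P j + d j P (j - 1)`, the Wronskian
`W j = P j * P (j + 1)' - P j' * P (j + 1)` satisfies `W j = P j ^ 2 - d j * W (j - 1)`: the terms
with `X - c j` cancel and differentiating `X` leaves `P j ^ 2`. Dividing by weights with
`h j = -d j * h (j - 1)` telescopes this into the confluent Christoffel–Darboux identity. For the
Heun recurrence the weight `h j = j! (β₂ α₁)^j (β₀/α₁)_j (-n)_j` has exactly this ratio.
-/

open Polynomial Finset

namespace Polynomial

variable {K : Type*} [Field K]

theorem wronskian_X_sub_C_mul_add_C_mul (p q : K[X]) (c d : K) :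
    wronskian q ((X - C c) * q + C d * p) = q ^ 2 - C d * wronskian p q := by
  simp only [wronskian, derivative_add, derivative_mul, derivative_sub, derivative_X,
    derivative_C]
  ring

theorem sum_C_inv_mul_sq_eq_C_inv_mul_wronskian {P : ℕ → K[X]} {c d h : ℕ → K}
    (hP0 : P 0 = 1) (hP1 : P 1 = X - C (c 0))
    (hrec : ∀ j, P (j + 2) = (X - C (c (j + 1))) * P (j + 1) + C (d (j + 1)) * P j)
    (h_zero : h 0 = 1) (h_succ : ∀ j, h (j + 1) = -d (j + 1) * h j) {m : ℕ} (hm : h m ≠ 0) :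
    ∑ j ∈ range (m + 1), C (h j)⁻¹ * P j ^ 2 = C (h m)⁻¹ * wronskian (P m) (P (m + 1)) := by
  induction m with
  | zero => simp [hP0, hP1, h_zero, wronskian]
  | succ m ih =>
    rw [h_succ] at hm
    obtain ⟨hd, hm'⟩ := mul_ne_zero_iff.mp hm
    have hC : C (h (m + 1))⁻¹ * C (d (m + 1)) = -C (h m)⁻¹ := by
      rw [← C_mul, ← C_neg, h_succ]
      field_simp [neg_ne_zero.mp hd]
    rw [sum_range_succ, ih hm', hrec, wronskian_X_sub_C_mul_add_C_mul]
    linear_combination wronskian (P m) (P (m + 1)) * hC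

end Polynomial

theorem ascPochhammer_eval_neg_natCast_ne_zero {R : Type*} [Ring R] [IsDomain R] [CharZero R]
    {m n : ℕ} (hmn : m ≤ n) : (ascPochhammer R m).eval (-(n : R)) ≠ 0 := by
  rw [ascPochhammer_eval_neg_eq_descPochhammer, descPochhammer_eval_eq_descFactorial]
  exact mul_ne_zero (pow_ne_zero _ (neg_ne_zero.mpr one_ne_zero))
    (Nat.cast_ne_zero.mpr (Nat.descFactorial_eq_zero_iff_lt.not.mpr (not_lt.mpr hmn)))

section Heun

variable (n : ℕ) (α₁ β₀ β₂ : ℝ)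

noncomputable def heunSqNorm (j : ℕ) : ℝ :=
  (j.factorial : ℝ) * (β₂ * α₁) ^ j * (ascPochhammer ℝ j).eval (β₀ / α₁)
    * (ascPochhammer ℝ j).eval (-(n : ℝ))

theorem heunSqNorm_zero : heunSqNorm n α₁ β₀ β₂ 0 = 1 := by
  simp [heunSqNorm]

variable {n α₁ β₀ β₂}

theorem heunSqNorm_succ (hα₁ : α₁ ≠ 0) (j : ℕ) :
    heunSqNorm n α₁ β₀ β₂ (j + 1) =
      -(((j + 1 : ℕ) : ℝ) * ((n : ℝ) + 1 - ((j + 1 : ℕ) : ℝ)) * β₂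
        * ((((j + 1 : ℕ) : ℝ) - 1) * α₁ + β₀)) * heunSqNorm n α₁ β₀ β₂ j := by
  simp only [heunSqNorm, Nat.factorial_succ, ascPochhammer_succ_eval, pow_succ]
  field_simp
  push_cast
  ring

theorem heunSqNorm_ne_zero (hα₁ : α₁ ≠ 0) (hβ₂ : β₂ ≠ 0) {m : ℕ} (hmn : m ≤ n)
    (hpoch : (ascPochhammer ℝ m).eval (β₀ / α₁) ≠ 0) : heunSqNorm n α₁ β₀ β₂ m ≠ 0 :=
  mul_ne_zero (mul_ne_zero (mul_ne_zero (Nat.cast_ne_zero.mpr m.factorial_ne_zero)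
    (pow_ne_zero _ (mul_ne_zero hβ₂ hα₁))) hpoch) (ascPochhammer_eval_neg_natCast_ne_zero hmn)

end Heun

theorem heun_christoffel_darboux_confluent_general
    (n : ℕ) (α₁ α₂ β₀ β₁ β₂ : ℝ) (hα₁ : α₁ ≠ 0) (hβ₂ : β₂ ≠ 0)
    (P : ℕ → Polynomial ℝ) (hP0 : P 0 = 1) (hP1 : P 1 = X)
    (hPrec : ∀ j : ℕ, 1 ≤ j → P (j + 1) =
      (X - C ((j : ℝ) * ((j : ℝ) - 1) * α₂ + (j : ℝ) * β₁)) * P j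
        + C ((j : ℝ) * ((n : ℝ) + 1 - (j : ℝ)) * β₂ * (((j : ℝ) - 1) * α₁ + β₀)) * P (j - 1))
    (m : ℕ) (hmn : m ≤ n - 1)
    (hpoch : ∀ j : ℕ, 1 ≤ j → j ≤ m → (ascPochhammer ℝ j).eval (β₀ / α₁) ≠ 0)
    (ζ : ℝ) :
    ∑ j ∈ Finset.range (m + 1),
      ((P j).eval ζ) ^ 2 /
        ((j.factorial : ℝ) * (β₂ * α₁) ^ j * (ascPochhammer ℝ j).eval (β₀ / α₁)
          * (ascPochhammer ℝ j).eval (-(n : ℝ)))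
    = ((derivative (P (m + 1))).eval ζ * (P m).eval ζ
        - (derivative (P m)).eval ζ * (P (m + 1)).eval ζ) /
        ((m.factorial : ℝ) * (β₂ * α₁) ^ m * (ascPochhammer ℝ m).eval (β₀ / α₁)
          * (ascPochhammer ℝ m).eval (-(n : ℝ))) := by
  have hm : heunSqNorm n α₁ β₀ β₂ m ≠ 0 := by
    rcases Nat.eq_zero_or_pos m with rfl | hm1
    · simp [heunSqNorm_zero]
    · exact heunSqNorm_ne_zero hα₁ hβ₂ (by omega) (hpoch m hm1 le_rfl)
  have key := congrArg (eval ζ) <| sum_C_inv_mul_sq_eq_C_inv_mul_wronskian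
    (c := fun j : ℕ ↦ (j : ℝ) * ((j : ℝ) - 1) * α₂ + (j : ℝ) * β₁)
    (d := fun j : ℕ ↦ (j : ℝ) * ((n : ℝ) + 1 - (j : ℝ)) * β₂ * (((j : ℝ) - 1) * α₁ + β₀))
    hP0 (by simpa using hP1)
    (fun j ↦ hPrec (j + 1) j.succ_pos) (heunSqNorm_zero n α₁ β₀ β₂)
    (heunSqNorm_succ hα₁) hm
  simp only [eval_finsetSum, eval_mul, eval_C, eval_pow, wronskian, eval_sub, inv_mul_eq_div,
    heunSqNorm] at key
  rw [key]
  ring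

/-- Confluent (ζ₂ → ζ₁) limit of the Christoffel–Darboux formula for the finite
sequence of orthogonal polynomials attached to the generalized confluent Heun
equation. -/
theorem heun_christoffel_darboux_confluent
    (n : ℕ) (hn : 2 ≤ n) (α₁ α₂ β₀ β₁ β₂ : ℝ) (hα₁ : α₁ ≠ 0) (hβ₂ : β₂ ≠ 0)
    (P : ℕ → Polynomial ℝ) (hP0 : P 0 = 1) (hP1 : P 1 = X)
    (hPrec : ∀ j : ℕ, 1 ≤ j → P (j + 1) =
      (X - C ((j : ℝ) * ((j : ℝ) - 1) * α₂ + (j : ℝ) * β₁)) * P j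
        + C ((j : ℝ) * ((n : ℝ) + 1 - (j : ℝ)) * β₂ * (((j : ℝ) - 1) * α₁ + β₀)) * P (j - 1))
    (m : ℕ) (hm1 : 1 ≤ m) (hmn : m ≤ n - 1)
    (hpoch : ∀ j : ℕ, 1 ≤ j → j ≤ m → (ascPochhammer ℝ j).eval (β₀ / α₁) ≠ 0)
    (ζ : ℝ) :
    ∑ j ∈ Finset.range (m + 1),
      ((P j).eval ζ) ^ 2 /
        ((j.factorial : ℝ) * (β₂ * α₁) ^ j * (ascPochhammer ℝ j).eval (β₀ / α₁)
          * (ascPochhammer ℝ j).eval (-(n : ℝ)))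
    = ((derivative (P (m + 1))).eval ζ * (P m).eval ζ
        - (derivative (P m)).eval ζ * (P (m + 1)).eval ζ) /
        ((m.factorial : ℝ) * (β₂ * α₁) ^ m * (ascPochhammer ℝ m).eval (β₀ / α₁)
          * (ascPochhammer ℝ m).eval (-(n : ℝ))) :=
  heun_christoffel_darboux_confluent_general n α₁ α₂ β₀ β₁ β₂ hα₁ hβ₂ P hP0 hP1 hPrec m hmn hpoch ζ
end

section
/- Fix n ∈ ℕ and real parameters α₁, α₂, β₀, β₁, β₂. Let P_j ∈ ℝ[ζ] be defined for all j ≥ −1 by P_{−1} = 0, P_0 = 1, P_{j+1}(ζ) = (ζ − j(j−1)α₂ − j β₁) P_j(ζ) + j(n+1−j) β₂ ((j−1)α₁ + β₀) P_{j−1}(ζ), and let Q_k ∈ ℝ[ζ] be defined by Q_{−1} = 0, Q_0 = 1, Q_k(ζ) = (ζ − (k+n)((k+n−1)α₂ + β₁)) Q_{k−1}(ζ) − (k−1)(k+n) β₂ ((k+n−1)α₁ + β₀) Q_{k−2}(ζ) for k ≥ 1. Then for every k ≥ 0, P_{k+n+1}(ζ) = Q_k(ζ) · P_{n+1}(ζ)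 as polynomials in ζ. -/
open Polynomial

/-- Factorization property: every polynomial `P_{k+n+1}` beyond the critical polynomial
`P_{n+1}` factors as `P_{k+n+1} = Q_k · P_{n+1}`, where the quotients `Q_k` satisfy
their own three-term recurrence. -/
theorem heun_factorization_property
    (n : ℕ) (α₁ α₂ β₀ β₁ β₂ : ℝ)
    (P : ℤ → Polynomial ℝ) (hPneg : P (-1) = 0) (hP0 : P 0 = 1)
    (hPrec : ∀ j : ℕ, P ((j : ℤ) + 1) =
      (X - C ((j : ℝ) * ((j : ℝ) - 1) * α₂ + (j : ℝ) * β₁)) * P (j : ℤ)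
        + C ((j : ℝ) * ((n : ℝ) + 1 - (j : ℝ)) * β₂ * (((j : ℝ) - 1) * α₁ + β₀)) * P ((j : ℤ) - 1))
    (Q : ℤ → Polynomial ℝ) (hQneg : Q (-1) = 0) (hQ0 : Q 0 = 1)
    (hQrec : ∀ k : ℕ, 1 ≤ k → Q (k : ℤ) =
      (X - C (((k : ℝ) + (n : ℝ)) * (((k : ℝ) + (n : ℝ) - 1) * α₂ + β₁))) * Q ((k : ℤ) - 1)
        - C (((k : ℝ) - 1) * ((k : ℝ) + (n : ℝ)) * β₂ * (((k : ℝ) + (n : ℝ) - 1) * α₁ + β₀))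
          * Q ((k : ℤ) - 2)) :
    ∀ k : ℕ, P ((k : ℤ) + (n : ℤ) + 1) = Q (k : ℤ) * P ((n : ℤ) + 1) := by
  intro k
  induction k using Nat.twoStepInduction with
  | zero => simpa using (hQ0 ▸ (one_mul _).symm)
  | one =>
      have hp := hPrec (n + 1)
      have hq := hQrec 1 le_rfl
      push_cast at hp hq ⊢
      rw [show ((n : ℤ) + 1) - 1 = (n : ℤ) from by ring] at hp
      have hc1 : C ((↑n + 1 : ℝ) * (↑n + 1 - 1) * α₂ + (↑n + 1) * β₁)
          = C ((1 + (n : ℝ)) * ((1 + ↑n - 1) * α₂ + β₁)) := by congr 1; ring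
      have hc2 : ((↑n + 1 : ℝ) * (↑n + 1 - (↑n + 1)) * β₂ * ((↑n + 1 - 1) * α₁ + β₀)) = 0 := by
        ring
      rw [hc1, hc2, map_zero, zero_mul, add_zero] at hp
      have hz : ((1:ℝ) - 1) * (1 + ↑n) * β₂ * ((1 + ↑n - 1) * α₁ + β₀) = 0 := by ring
      rw [hQ0, mul_one, hz, map_zero, zero_mul, sub_zero] at hq
      rw [show ((1:ℤ) + (n:ℤ) + 1 : ℤ) = ((n:ℤ) + 1) + 1 from by ring, hp, hq]
  | more k ih1 ih =>
      have hp := hPrec (k + n + 2)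
      have hq := hQrec (k + 2) (by omega)
      push_cast at hp hq ih ih1 ⊢
      rw [show ((k:ℤ) + ↑n + 2 + 1 : ℤ) = (↑k + 2 + ↑n + 1) from by ring,
        show ((k:ℤ) + ↑n + 2 - 1 : ℤ) = (↑k + ↑n + 1) from by ring,
        show ((k:ℤ) + ↑n + 2 : ℤ) = (↑k + 1 + ↑n + 1) from by ring,
        ih, ih1] at hp
      rw [show ((k:ℤ) + 2 - 1 : ℤ) = (↑k + 1) from by ring,
        show ((k:ℤ) + 2 - 2 : ℤ) = (↑k : ℤ) from by ring] at hq
      have hc1 : C (((k:ℝ) + ↑n + 2) * (↑k + ↑n + 2 - 1) * α₂ + (↑k + ↑n + 2) * β₁)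
          = C (((k:ℝ) + 2 + ↑n) * ((↑k + 2 + ↑n - 1) * α₂ + β₁)) := by congr 1; ring
      have hc2 : C (((k:ℝ) + ↑n + 2) * (↑n + 1 - (↑k + ↑n + 2)) * β₂ * ((↑k + ↑n + 2 - 1) * α₁ + β₀))
          = - C (((k:ℝ) + 2 - 1) * (↑k + 2 + ↑n) * β₂ * ((↑k + 2 + ↑n - 1) * α₁ + β₀)) := by
        rw [← map_neg]; congr 1; ring
      rw [hc1, hc2] at hp
      rw [hp, hq]; ring
end

section
/- Fix n ∈ ℕ and real parameters α₁, α₂, β₀, β₁, β₂ with α₁ ≠ 0 and β₂ ≠ 0, and let Q_j be the polynomials defined by Q_{−1} = 0, Q_0 = 1, Q_j(ζ) = (ζ − (j+n)((j+n−1)α₂ + β₁)) Q_{j−1}(ζ) − (j−1)(j+n) β₂ ((j+n−1)α₁ + β₀) Q_{j−2}(ζ) for j ≥ 1. Let k ≥ 0 and assume (n+1+β₀/α₁)_j ≠ 0 for 1 ≤ j ≤ k. Then for all real ζ₁ ≠ ζ₂: Σ_{j=0}^{k} Q_j(ζ₁) Q_j(ζ₂) / (j! (n+2)_j (β₂ α₁)^j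 (n+1+β₀/α₁)_j) = (Q_{k+1}(ζ₁) Q_k(ζ₂) − Q_k(ζ₁) Q_{k+1}(ζ₂)) / (k! (n+2)_k (β₂ α₁)^k (n+1+β₀/α₁)_k (ζ₁ − ζ₂)). -/
open Polynomial

/-!
A three-term recurrence `p (m + 2) = (X - b m) p (m + 1) - c m p m` makes the Casoratian
`W m = p (m + 1)(x) p m (y) - p m (x) p (m + 1)(y)` satisfy
`W (m + 1) = (x - y) p (m + 1)(x) p (m + 1)(y) + c m W m`, so that dividing by a normalizer with
`h (m + 1) = h m c m` telescopes. For the Heun quotient sequence the normalizer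
`j! (n + 2)_j (β₂ α₁)^j (n + 1 + β₀ / α₁)_j` has exactly the ratios `c m` of the recurrence.
-/

section ChristoffelDarboux

variable {K : Type*} [Field K] {p : ℕ → K[X]} {b c h : ℕ → K} {b₀ x y : K}

theorem casoratian_succ (hrec : ∀ m, p (m + 2) = (X - C (b m)) * p (m + 1) - C (c m) * p m)
    (m : ℕ) :
    (p (m + 2)).eval x * (p (m + 1)).eval y - (p (m + 1)).eval x * (p (m + 2)).eval y
      = (x - y) * ((p (m + 1)).eval x * (p (m + 1)).eval y)
        + c m * ((p (m + 1)).eval x * (p m).eval y - (p m).eval x * (p (m + 1)).eval y) := by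
  simp only [hrec, eval_sub, eval_mul, eval_X, eval_C]
  ring

theorem sum_div_mul_sub_eq_casoratian (hp₁ : p 1 = (X - C b₀) * p 0)
    (hrec : ∀ m, p (m + 2) = (X - C (b m)) * p (m + 1) - C (c m) * p m)
    (hh : ∀ m, h (m + 1) = h m * c m) {k : ℕ} (hk : h k ≠ 0) :
    (∑ j ∈ Finset.range (k + 1), (p j).eval x * (p j).eval y / h j) * (x - y)
      = ((p (k + 1)).eval x * (p k).eval y - (p k).eval x * (p (k + 1)).eval y) / h k := by
  induction k with
  | zero =>
    simp only [zero_add, Finset.sum_range_one, hp₁, eval_mul, eval_sub, eval_X, eval_C]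
    ring
  | succ k ih =>
    rw [hh] at hk ⊢
    obtain ⟨hhk, hck⟩ := mul_ne_zero_iff.mp hk
    rw [Finset.sum_range_succ, add_mul, ih hhk, casoratian_succ hrec, hh]
    field_simp
    ring

theorem christoffel_darboux (hp₁ : p 1 = (X - C b₀) * p 0)
    (hrec : ∀ m, p (m + 2) = (X - C (b m)) * p (m + 1) - C (c m) * p m)
    (hh : ∀ m, h (m + 1) = h m * c m) {k : ℕ} (hk : h k ≠ 0) (hxy : x ≠ y) :
    ∑ j ∈ Finset.range (k + 1), (p j).eval x * (p j).eval y / h j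
      = ((p (k + 1)).eval x * (p k).eval y - (p k).eval x * (p (k + 1)).eval y)
        / (h k * (x - y)) := by
  rw [← div_div, eq_div_iff (sub_ne_zero.mpr hxy)]
  exact sum_div_mul_sub_eq_casoratian hp₁ hrec hh hk

end ChristoffelDarboux

noncomputable def heunQuotientNorm (n : ℕ) (α₁ β₀ β₂ : ℝ) (j : ℕ) : ℝ :=
  (j.factorial : ℝ) * (ascPochhammer ℝ j).eval ((n : ℝ) + 2) * (β₂ * α₁) ^ j
    * (ascPochhammer ℝ j).eval ((n : ℝ) + 1 + β₀ / α₁)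

theorem heunQuotientNorm_succ (n : ℕ) {α₁ : ℝ} (β₀ β₂ : ℝ) (hα₁ : α₁ ≠ 0) (m : ℕ) :
    heunQuotientNorm n α₁ β₀ β₂ (m + 1) = heunQuotientNorm n α₁ β₀ β₂ m
      * ((((m + 2 : ℕ) : ℝ) - 1) * (((m + 2 : ℕ) : ℝ) + n) * β₂
        * ((((m + 2 : ℕ) : ℝ) + n - 1) * α₁ + β₀)) := by
  simp only [heunQuotientNorm, ascPochhammer_succ_right, Nat.factorial_succ, eval_mul, eval_add,
    eval_X, eval_natCast]
  push_cast
  field_simp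
  ring

theorem heunQuotientNorm_ne_zero (n : ℕ) {α₁ β₂ : ℝ} (β₀ : ℝ) (hα₁ : α₁ ≠ 0) (hβ₂ : β₂ ≠ 0)
    {k : ℕ} (hk : (ascPochhammer ℝ k).eval ((n : ℝ) + 1 + β₀ / α₁) ≠ 0) :
    heunQuotientNorm n α₁ β₀ β₂ k ≠ 0 := by
  have hfac : (k.factorial : ℝ) ≠ 0 := Nat.cast_ne_zero.mpr k.factorial_ne_zero
  have hpoch : (ascPochhammer ℝ k).eval ((n : ℝ) + 2) ≠ 0 :=
    (ascPochhammer_pos k _ (by positivity)).ne'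
  exact mul_ne_zero (mul_ne_zero (mul_ne_zero hfac hpoch) (pow_ne_zero _ (mul_ne_zero hβ₂ hα₁))) hk

theorem heun_quotient_christoffel_darboux_general
    (n : ℕ) (α₁ α₂ β₀ β₁ β₂ : ℝ) (hα₁ : α₁ ≠ 0) (hβ₂ : β₂ ≠ 0)
    (Q : ℤ → Polynomial ℝ) (hQneg : Q (-1) = 0)
    (hQrec : ∀ j : ℕ, 1 ≤ j → Q (j : ℤ) =
      (X - C (((j : ℝ) + (n : ℝ)) * (((j : ℝ) + (n : ℝ) - 1) * α₂ + β₁))) * Q ((j : ℤ) - 1)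
        - C (((j : ℝ) - 1) * ((j : ℝ) + (n : ℝ)) * β₂ * (((j : ℝ) + (n : ℝ) - 1) * α₁ + β₀))
          * Q ((j : ℤ) - 2))
    (k : ℕ)
    (hpoch : ∀ j : ℕ, 1 ≤ j → j ≤ k → (ascPochhammer ℝ j).eval ((n : ℝ) + 1 + β₀ / α₁) ≠ 0)
    (ζ₁ ζ₂ : ℝ) (hζ : ζ₁ ≠ ζ₂) :
    ∑ j ∈ Finset.range (k + 1),
      (Q (j : ℤ)).eval ζ₁ * (Q (j : ℤ)).eval ζ₂ /
        ((j.factorial : ℝ) * (ascPochhammer ℝ j).eval ((n : ℝ) + 2) * (β₂ * α₁) ^ j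
          * (ascPochhammer ℝ j).eval ((n : ℝ) + 1 + β₀ / α₁))
    = ((Q ((k : ℤ) + 1)).eval ζ₁ * (Q (k : ℤ)).eval ζ₂
        - (Q (k : ℤ)).eval ζ₁ * (Q ((k : ℤ) + 1)).eval ζ₂) /
        ((k.factorial : ℝ) * (ascPochhammer ℝ k).eval ((n : ℝ) + 2) * (β₂ * α₁) ^ k
          * (ascPochhammer ℝ k).eval ((n : ℝ) + 1 + β₀ / α₁) * (ζ₁ - ζ₂)) := by
  have hQ₁ : Q ((1 : ℕ) : ℤ) = (X - C ((1 + n) * (n * α₂ + β₁))) * Q ((0 : ℕ) : ℤ) := by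
    simpa [hQneg] using hQrec 1 le_rfl
  have hk : heunQuotientNorm n α₁ β₀ β₂ k ≠ 0 := by
    refine heunQuotientNorm_ne_zero n β₀ hα₁ hβ₂ ?_
    rcases Nat.eq_zero_or_pos k with rfl | hk
    · simp
    · exact hpoch k hk le_rfl
  have key := christoffel_darboux (p := fun m : ℕ => Q m) hQ₁
    (fun m => by
      have h := hQrec (m + 2) le_add_self
      rwa [show ((m + 2 : ℕ) : ℤ) - 1 = ((m + 1 : ℕ) : ℤ) by push_cast; ring,
        show ((m + 2 : ℕ) : ℤ) - 2 = m by push_cast; ring] at h)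
    (heunQuotientNorm_succ n β₀ β₂ hα₁) hk hζ
  simpa only [Nat.cast_succ, heunQuotientNorm] using key

/-- Christoffel–Darboux formula for the quotient orthogonal polynomial sequence
obtained by factoring the critical polynomial out of the finite orthogonal
polynomial sequence attached to the generalized confluent Heun equation. -/
theorem heun_quotient_christoffel_darboux
    (n : ℕ) (α₁ α₂ β₀ β₁ β₂ : ℝ) (hα₁ : α₁ ≠ 0) (hβ₂ : β₂ ≠ 0)
    (Q : ℤ → Polynomial ℝ) (hQneg : Q (-1) = 0) (hQ0 : Q 0 = 1)
    (hQrec : ∀ j : ℕ, 1 ≤ j → Q (j : ℤ) =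
      (X - C (((j : ℝ) + (n : ℝ)) * (((j : ℝ) + (n : ℝ) - 1) * α₂ + β₁))) * Q ((j : ℤ) - 1)
        - C (((j : ℝ) - 1) * ((j : ℝ) + (n : ℝ)) * β₂ * (((j : ℝ) + (n : ℝ) - 1) * α₁ + β₀))
          * Q ((j : ℤ) - 2))
    (k : ℕ)
    (hpoch : ∀ j : ℕ, 1 ≤ j → j ≤ k → (ascPochhammer ℝ j).eval ((n : ℝ) + 1 + β₀ / α₁) ≠ 0)
    (ζ₁ ζ₂ : ℝ) (hζ : ζ₁ ≠ ζ₂) :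
    ∑ j ∈ Finset.range (k + 1),
      (Q (j : ℤ)).eval ζ₁ * (Q (j : ℤ)).eval ζ₂ /
        ((j.factorial : ℝ) * (ascPochhammer ℝ j).eval ((n : ℝ) + 2) * (β₂ * α₁) ^ j
          * (ascPochhammer ℝ j).eval ((n : ℝ) + 1 + β₀ / α₁))
    = ((Q ((k : ℤ) + 1)).eval ζ₁ * (Q (k : ℤ)).eval ζ₂
        - (Q (k : ℤ)).eval ζ₁ * (Q ((k : ℤ) + 1)).eval ζ₂) /
        ((k.factorial : ℝ) * (ascPochhammer ℝ k).eval ((n : ℝ) + 2) * (β₂ * α₁) ^ k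
          * (ascPochhammer ℝ k).eval ((n : ℝ) + 1 + β₀ / α₁) * (ζ₁ - ζ₂)) :=
  heun_quotient_christoffel_darboux_general n α₁ α₂ β₀ β₁ β₂ hα₁ hβ₂ Q hQneg hQrec k hpoch ζ₁ ζ₂ hζ
end

section
/- Let k, v, ℰ be real numbers, n ∈ ℕ, and let f be a real polynomial of degree exactly n satisfying (r² + r) f''(r) + (−2ℰ r² + (k−1−2ℰ) r + (k−1)) f'(r) − (((k−1)ℰ − v) r + (k−1)ℰ) f(r) = 0 for all r > 0. Then v = (2n + k − 1) ℰ. -/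
open Polynomial

/-- Quantization condition: if the transformed softcore-Coulomb equation has a
polynomial solution of degree exactly `n`, then `v = (2n + k − 1) ℰ`. -/
theorem softcore_quantization_condition
    (k v ℰ : ℝ) (n : ℕ) (f : Polynomial ℝ) (hdeg : f.degree = n)
    (hode : ∀ r : ℝ, 0 < r →
      (r ^ 2 + r) * (derivative (derivative f)).eval r
        + (-2 * ℰ * r ^ 2 + (k - 1 - 2 * ℰ) * r + (k - 1)) * (derivative f).eval r
        - (((k - 1) * ℰ - v) * r + (k - 1) * ℰ) * f.eval r = 0) :
    v = (2 * (n : ℝ) + k - 1) * ℰ := by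
  have hnd : f.natDegree = n := natDegree_eq_of_degree_eq_some hdeg
  have hfne : f ≠ 0 := by
    intro h; rw [h, degree_zero] at hdeg; exact absurd hdeg (by simp)
  have hc : f.coeff n ≠ 0 := by
    rw [← hnd]; exact mt leadingCoeff_eq_zero.mp hfne
  set P : Polynomial ℝ :=
    (X ^ 2 + X) * derivative (derivative f)
      + (C (-2 * ℰ) * X ^ 2 + C (k - 1 - 2 * ℰ) * X + C (k - 1)) * derivative f
      - (C ((k - 1) * ℰ - v) * X + C ((k - 1) * ℰ)) * f with hPdef
  have hP : P = 0 := by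
    apply eq_zero_of_infinite_isRoot
    apply (Set.Ioi_infinite (0 : ℝ)).mono
    intro r hr
    simp only [Set.mem_setOf_eq, IsRoot.def, hPdef, eval_sub, eval_add, eval_mul,
      eval_pow, eval_X, eval_C]
    linear_combination hode r hr
  -- coefficient of degree n+1
  have hcoeff : P.coeff (n + 1) = 0 := by rw [hP]; simp
  cases n with
  | zero =>
    -- f is a nonzero constant
    have h1 := hode 1 one_pos
    have h2 := hode 2 two_pos
    have hf1 : f.eval 1 = f.coeff 0 := by
      conv_lhs => rw [eq_C_of_natDegree_eq_zero hnd]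
      simp
    have hf2 : f.eval 2 = f.coeff 0 := by
      conv_lhs => rw [eq_C_of_natDegree_eq_zero hnd]
      simp
    have hd : derivative f = 0 := by
      rw [eq_C_of_natDegree_eq_zero hnd]; simp
    rw [hd] at h1 h2
    simp only [derivative_zero, eval_zero, mul_zero, zero_add, hf1, hf2] at h1 h2
    have : ((k - 1) * ℰ - v) * f.coeff 0 = 0 := by linear_combination h1 - h2
    have hv : (k - 1) * ℰ - v = 0 := by
      rcases mul_eq_zero.mp this with h | h
      · exact h
      · exact absurd h hc
    push_cast
    linarith
  | succ m =>
    have hdm : ∀ j, m + 1 < j → f.coeff j = 0 := by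
      intro j hj
      exact coeff_eq_zero_of_natDegree_lt (by omega : f.natDegree < j)
    have hcm2 : f.coeff (m + 2) = 0 := hdm _ (by omega)
    have hcm3 : f.coeff (m + 3) = 0 := hdm _ (by omega)
    set f1 := derivative f with hf1
    set f2 := derivative f1 with hf2
    have d1 : f1.coeff m = f.coeff (m + 1) * (m + 1) := coeff_derivative f m
    have d2 : f1.coeff (m + 1) = 0 := by
      rw [hf1, coeff_derivative, hcm2]; ring
    have d3 : f1.coeff (m + 2) = 0 := by
      rw [hf1, coeff_derivative, hcm3]; ring
    have dd1 : f2.coeff m = 0 := by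
      rw [hf2, coeff_derivative, d2]; ring
    have dd2 : f2.coeff (m + 1) = 0 := by
      rw [hf2, coeff_derivative, d3]; ring
    have e1 : (X ^ 2 * f2).coeff (m + 2) = f2.coeff m := coeff_X_pow_mul f2 2 m
    have e2 : (X * f2).coeff (m + 2) = f2.coeff (m + 1) := coeff_X_mul f2 (m + 1)
    have e3 : (X ^ 2 * f1).coeff (m + 2) = f1.coeff m := coeff_X_pow_mul f1 2 m
    have e4 : (X * f1).coeff (m + 2) = f1.coeff (m + 1) := coeff_X_mul f1 (m + 1)
    have e5 : (X * f).coeff (m + 2) = f.coeff (m + 1) := coeff_X_mul f (m + 1)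
    have key : P.coeff (m + 2)
        = -2 * ℰ * (f.coeff (m + 1) * (m + 1))
          - ((k - 1) * ℰ - v) * f.coeff (m + 1) := by
      simp only [hPdef, ← hf1, ← hf2, coeff_sub, coeff_add, add_mul, mul_assoc,
        coeff_C_mul, e1, e2, e3, e4, e5, d1, d2, d3, dd1, dd2, hcm2]
      ring
    rw [show m + 1 + 1 = m + 2 from rfl, key] at hcoeff
    have hc' : f.coeff (m + 1) ≠ 0 := hc
    have : (-2 * ℰ * ((m : ℝ) + 1) - ((k - 1) * ℰ - v)) * f.coeff (m + 1) = 0 := by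
      linear_combination hcoeff
    rcases mul_eq_zero.mp this with h | h
    · push_cast
      linarith
    · exact absurd h hc'
end

section
/- Let k be a real number and define ψ(r) = r^{(k−1)/2} e^{−r} (1 + r) for r > 0. Then −ψ''(r) + ((k−1)(k−3)/(4r²)) ψ(r) − ((k+1)/(r+1)) ψ(r) = −ψ(r) for all r > 0. -/
/-!
Writing `a = (k - 1) / 2`, every derivative of `r ^ b * exp (-r) * p r` is again of this shape, with
`b` lowered by one and a new polynomial factor. Differentiating `ψ` twice this way gives
`ψ'' = r ^ (a - 2) * exp (-r) * q r` for an explicit cubic `q`, and the eigenvalue equation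
becomes a polynomial identity in `r` after clearing the denominators `r ^ 2` and `r + 1`.
-/

open Real Filter Topology

theorem hasDerivAt_rpow_mul_exp_neg_mul {p : ℝ → ℝ} {p' r : ℝ} (b : ℝ) (hr : 0 < r)
    (hp : HasDerivAt p p' r) :
    HasDerivAt (fun s => s ^ b * exp (-s) * p s)
      (r ^ (b - 1) * exp (-r) * (b * p r + r * p' - r * p r)) r := by
  have hpow := hasDerivAt_rpow_const (p := b) (Or.inl hr.ne')
  have hexp : HasDerivAt (fun s => exp (-s)) (-exp (-r)) r := by
    simpa using (hasDerivAt_neg r).exp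
  refine ((hpow.mul hexp).mul hp).congr_deriv ?_
  rw [Pi.mul_apply, rpow_sub_one hr.ne']
  field_simp
  ring

theorem deriv_deriv_rpow_mul_exp_neg_mul_one_add {a r : ℝ} (hr : 0 < r) :
    deriv (deriv fun s => s ^ a * exp (-s) * (1 + s)) r =
      r ^ (a - 2) * exp (-r) *
        ((a - 1) * (a + a * r - r ^ 2) + r * (a - 2 * r) - r * (a + a * r - r ^ 2)) := by
  have hfirst : ∀ s ∈ Set.Ioi (0 : ℝ), deriv (fun s => s ^ a * exp (-s) * (1 + s)) s =
      s ^ (a - 1) * exp (-s) * (a + a * s - s ^ 2) := fun s hs => by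
    refine ((hasDerivAt_rpow_mul_exp_neg_mul a hs ((hasDerivAt_id' s).const_add 1)).deriv).trans ?_
    ring
  have hq : HasDerivAt (fun s => a + a * s - s ^ 2) (a - 2 * r) r := by
    refine ((((hasDerivAt_id' r).const_mul a).const_add a).sub (hasDerivAt_pow 2 r)).congr_deriv ?_
    ring
  rw [(eventuallyEq_of_mem (Ioi_mem_nhds hr) hfirst).deriv_eq,
    (hasDerivAt_rpow_mul_exp_neg_mul (a - 1) hr hq).deriv, sub_sub, one_add_one_eq_two]

/-- The function `ψ(r) = r^{(k−1)/2} e^{−r} (1+r)` is an exact eigenfunction of the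
softcore Coulomb Schrödinger equation with `v = k+1` and energy `E = −1`. -/
theorem softcore_ground_state
    (k : ℝ) (ψ : ℝ → ℝ)
    (hψ : ∀ r ∈ Set.Ioi (0 : ℝ), ψ r = r ^ ((k - 1) / 2) * Real.exp (-r) * (1 + r)) :
    ∀ r ∈ Set.Ioi (0 : ℝ),
      -deriv (deriv ψ) r + ((k - 1) * (k - 3) / (4 * r ^ 2)) * ψ r
        - ((k + 1) / (r + 1)) * ψ r = -ψ r := by
  intro r (hr : 0 < r)
  set a := (k - 1) / 2
  have hψ'' : deriv (deriv ψ) r = deriv (deriv fun s => s ^ a * exp (-s) * (1 + s)) r :=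
    (eventuallyEq_of_mem (Ioi_mem_nhds hr) hψ).deriv.deriv_eq
  have hpow : r ^ a = r ^ (a - 2) * r ^ 2 := by
    rw [← rpow_natCast, ← rpow_add hr]
    norm_num
  have hk : k = 2 * a + 1 := by ring
  have hr0 : r ≠ 0 := ne_of_gt hr
  have hr1 : r + 1 ≠ 0 := by positivity
  rw [hψ'', deriv_deriv_rpow_mul_exp_neg_mul_one_add hr, hψ r hr, hpow, hk]
  field_simp
  ring
end

section
/- Let k > 0 be a real number and let ℰ be a real number satisfying (k+1) ℰ² − 3(k+1) ℰ + 2k = 0; equivalently, ℰ = 3/2 − (1/2)√((k+9)/(k+1)) or ℰ = 3/2 + (1/2)√((k+9)/(k+1)). Define ψ(r) = r^{(k−1)/2} e^{−ℰ r} (1 + ℰ r + (ℰ(ℰ(k+1) − k − 3)/(2k)) r²) for r > 0. Then −ψ''(r) + ((k−1)(k−3)/(4r²)) ψ(r) − ((k+3)ℰ/(r+1)) ψ(r) = −ℰ² ψ(r) for all r > 0. -/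
/-!
Differentiating `x ^ a * exp (-E * x) * p x` for a polynomial `p` gives
`x ^ (a - 1) * exp (-E * x)` times the polynomial `a p + X (p' - E p)`. Applied twice to
`p = 1 + ℰ X + (ℰ - 1) X²` (the quadratic relation for `ℰ` makes the `r²` coefficient `ℰ - 1`),
the equation becomes, after cancelling `r ^ ((k - 5) / 2) * exp (-ℰ * r)` and clearing
denominators, a polynomial identity in `r` that is a multiple of the quadratic relation.
-/

open Polynomial Real Set Filter

noncomputable def rpowExpDerivative (a E : ℝ) (p : ℝ[X]) : ℝ[X] :=
  C a * p + X * (derivative p - C E * p)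

section

variable (a E : ℝ) (p : ℝ[X])

theorem hasDerivAt_rpow_mul_exp_mul_eval {x : ℝ} (hx : 0 < x) :
    HasDerivAt (fun y => y ^ a * exp (-E * y) * p.eval y)
      (x ^ (a - 1) * exp (-E * x) * (rpowExpDerivative a E p).eval x) x := by
  have hexp : HasDerivAt (fun y => exp (-E * y)) (exp (-E * x) * -E) x := by
    simpa using ((hasDerivAt_id x).const_mul (-E)).exp
  refine (((hasDerivAt_rpow_const (p := a) (Or.inl hx.ne')).mul hexp).mul
    (p.hasDerivAt x)).congr_deriv ?_
  rw [rpow_sub_one hx.ne']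
  simp only [rpowExpDerivative, eval_add, eval_mul, eval_sub, eval_C, eval_X, Pi.mul_apply]
  field_simp
  ring

theorem deriv_rpow_mul_exp_mul_eval_eqOn :
    EqOn (deriv fun y => y ^ a * exp (-E * y) * p.eval y)
      (fun y => y ^ (a - 1) * exp (-E * y) * (rpowExpDerivative a E p).eval y) (Ioi 0) :=
  fun _ hx => (hasDerivAt_rpow_mul_exp_mul_eval a E p hx).deriv

theorem deriv_deriv_rpow_mul_exp_mul_eval {x : ℝ} (hx : 0 < x) :
    deriv (deriv fun y => y ^ a * exp (-E * y) * p.eval y) x =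
      x ^ (a - 1 - 1) * exp (-E * x) *
        (rpowExpDerivative (a - 1) E (rpowExpDerivative a E p)).eval x := by
  have hderiv := (deriv_rpow_mul_exp_mul_eval_eqOn a E p).eventuallyEq_of_mem
    (isOpen_Ioi.mem_nhds hx)
  rw [hderiv.deriv_eq, (hasDerivAt_rpow_mul_exp_mul_eval _ E _ hx).deriv]

end

/-- For `ℰ` a root of `(k+1)ℰ² − 3(k+1)ℰ + 2k = 0` (equivalently
`ℰ = 3/2 ∓ (1/2)√((k+9)/(k+1))`), the function
`ψ(r) = r^{(k−1)/2} e^{−ℰr} (1 + ℰr + (ℰ(ℰ(k+1)−k−3)/(2k)) r²)` is an exact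
eigenfunction of the softcore Coulomb Schrödinger equation with `v = (k+3)ℰ` and
energy `E = −ℰ²`. -/
theorem softcore_degree_two_states
    (k : ℝ) (hk : 0 < k) (ℰ : ℝ)
    (hℰ : (k + 1) * ℰ ^ 2 - 3 * (k + 1) * ℰ + 2 * k = 0)
    (ψ : ℝ → ℝ)
    (hψ : ∀ r ∈ Set.Ioi (0 : ℝ), ψ r = r ^ ((k - 1) / 2) * Real.exp (-ℰ * r)
      * (1 + ℰ * r + (ℰ * (ℰ * (k + 1) - k - 3) / (2 * k)) * r ^ 2)) :
    ∀ r ∈ Set.Ioi (0 : ℝ),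
      -deriv (deriv ψ) r + ((k - 1) * (k - 3) / (4 * r ^ 2)) * ψ r
        - ((k + 3) * ℰ / (r + 1)) * ψ r = -ℰ ^ 2 * ψ r := by
  have hcoeff : ℰ * (ℰ * (k + 1) - k - 3) / (2 * k) = ℰ - 1 := by
    field_simp
    linear_combination hℰ
  set p : ℝ[X] := 1 + C ℰ * X + C (ℰ - 1) * X ^ 2
  have hψp : EqOn ψ (fun y => y ^ ((k - 1) / 2) * exp (-ℰ * y) * p.eval y) (Ioi 0) := by
    intro y hy
    simp only [hψ y hy, hcoeff, p, eval_add, eval_mul, eval_one, eval_C, eval_X, eval_pow]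
  intro r hr
  have hr0 : (0 : ℝ) < r := hr
  rw [(hψp.eventuallyEq_of_mem (isOpen_Ioi.mem_nhds hr)).deriv.deriv_eq,
    deriv_deriv_rpow_mul_exp_mul_eval _ _ _ hr0, hψp hr]
  have hsplit : r ^ ((k - 1) / 2) = r ^ ((k - 1) / 2 - 1 - 1) * r ^ 2 := by
    rw [← rpow_natCast r 2, ← rpow_add hr0]
    ring_nf
  simp only [rpowExpDerivative, p, hsplit, eval_add, eval_sub, eval_mul, eval_one, eval_C,
    eval_X, eval_pow, eval_zero, derivative_zero, derivative_add, derivative_sub,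
    derivative_mul, derivative_one, derivative_C, derivative_X, derivative_X_pow]
  field_simp
  linear_combination (16 * r ^ 2 * (1 + r)) * hℰ
end

section
/- Define real polynomials V_n by V₀(x) = 1/2, V₁(x) = x − 1, and V_n(x) = 2(x − n) V_{n−1}(x) − n(n−1) V_{n−2}(x) for n ≥ 2. Then for every n ≥ 0 and every real x, V_n(x) = (1/2) Σ_{j=0}^{n} (−1)^{n−j} (n! (n+1)! / ((n−j)! j! (j+1)!)) (2x)^j; that is, V_n(x) equals (−1)^n n!/2 times the associated Laguerre polynomial L_n^{(1)} evaluated at 2x. -/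
/-!
With `t = 2x`, both `2 V_n(x)` and `W_n(t) = (-1)^n n! L_n^{(1)}(t) = Σ_j c(n, j) t^j` satisfy
`W_{n+2} = (t - 2(n+2)) W_{n+1} - (n+2)(n+1) W_n` and agree for `n = 0, 1`. Comparing
coefficients of `t^j`, the recurrence for `W_n` follows from the two contiguous relations
`(n+1)(n+2) c(n, j) = (j+1)(j+2) c(n+1, j+1) = -(n+1-j) c(n+1, j)`, which reduce it to the
identity `m(m+1) = j(j+1) + 2m(m-j) - (m-j)(m-j-1)` with `m = n + 2`.
-/

open Polynomial

noncomputable section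

def scaledLaguerreCoeff (n j : ℕ) : ℝ :=
  if j ≤ n then
    (-1 : ℝ) ^ (n - j) *
      ((n.factorial : ℝ) * ((n + 1).factorial : ℝ) /
        (((n - j).factorial : ℝ) * (j.factorial : ℝ) * ((j + 1).factorial : ℝ)))
  else 0

/-- `(-1)^n n! L_n^{(1)}`. -/
def scaledLaguerre (n : ℕ) : ℝ[X] :=
  ∑ j ∈ Finset.range (n + 1), C (scaledLaguerreCoeff n j) * X ^ j

end

lemma scaledLaguerreCoeff_of_lt {n j : ℕ} (h : n < j) : scaledLaguerreCoeff n j = 0 := by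
  simp [scaledLaguerreCoeff, Nat.not_le.mpr h]

lemma scaledLaguerreCoeff_mul_succ_succ (n j : ℕ) :
    ((n : ℝ) + 1) * (n + 2) * scaledLaguerreCoeff n j =
      ((j : ℝ) + 1) * (j + 2) * scaledLaguerreCoeff (n + 1) (j + 1) := by
  rcases le_or_gt j n with h | h
  · obtain ⟨k, rfl⟩ := Nat.exists_eq_add_of_le h
    simp only [scaledLaguerreCoeff, if_pos h, if_pos (Nat.succ_le_succ h),
      Nat.add_sub_add_right, Nat.add_sub_cancel_left, Nat.factorial_succ]
    push_cast
    field_simp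
    ring
  · rw [scaledLaguerreCoeff_of_lt h, scaledLaguerreCoeff_of_lt (by omega)]
    ring

lemma scaledLaguerreCoeff_mul_succ_left (n j : ℕ) :
    ((n : ℝ) + 1) * (n + 2) * scaledLaguerreCoeff n j =
      -((n : ℝ) + 1 - j) * scaledLaguerreCoeff (n + 1) j := by
  rcases le_or_gt j n with h | h
  · obtain ⟨k, rfl⟩ := Nat.exists_eq_add_of_le h
    have hk : j + k + 1 - j = k + 1 := by omega
    simp only [scaledLaguerreCoeff, if_pos h, if_pos (Nat.le_succ_of_le h), hk,
      Nat.add_sub_cancel_left, Nat.factorial_succ, pow_succ]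
    push_cast
    field_simp
    ring
  · rcases (Nat.succ_le_of_lt h).eq_or_lt with rfl | h'
    · rw [scaledLaguerreCoeff_of_lt h]
      push_cast
      ring
    · rw [scaledLaguerreCoeff_of_lt h, scaledLaguerreCoeff_of_lt h']
      ring

lemma scaledLaguerreCoeff_rec_zero (n : ℕ) :
    scaledLaguerreCoeff (n + 2) 0 =
      -(2 * ((n : ℝ) + 2)) * scaledLaguerreCoeff (n + 1) 0
        - ((n : ℝ) + 2) * (n + 1) * scaledLaguerreCoeff n 0 := by
  have h₁ := scaledLaguerreCoeff_mul_succ_left (n + 1) 0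
  have h₀ := scaledLaguerreCoeff_mul_succ_left n 0
  push_cast at h₁ h₀
  apply mul_left_cancel₀ (show (n : ℝ) + 2 ≠ 0 by positivity)
  linear_combination h₁ + ((n : ℝ) + 2) * h₀

lemma scaledLaguerreCoeff_rec_succ (n j : ℕ) :
    scaledLaguerreCoeff (n + 2) (j + 1) =
      scaledLaguerreCoeff (n + 1) j - 2 * ((n : ℝ) + 2) * scaledLaguerreCoeff (n + 1) (j + 1)
        - ((n : ℝ) + 2) * (n + 1) * scaledLaguerreCoeff n (j + 1) := by
  have hdiag := scaledLaguerreCoeff_mul_succ_succ (n + 1) j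
  have h₁ := scaledLaguerreCoeff_mul_succ_left (n + 1) (j + 1)
  have h₀ := scaledLaguerreCoeff_mul_succ_left n (j + 1)
  push_cast at hdiag h₁ h₀
  apply mul_left_cancel₀ (show ((n : ℝ) + 2) * (n + 3) ≠ 0 by positivity)
  linear_combination -hdiag + (2 * ((n : ℝ) + 2) - (n - j)) * h₁ + ((n : ℝ) + 2) * (n + 3) * h₀

lemma coeff_scaledLaguerre (n j : ℕ) : (scaledLaguerre n).coeff j = scaledLaguerreCoeff n j := by
  simp only [scaledLaguerre, finsetSum_coeff, coeff_C_mul_X_pow, Finset.sum_ite_eq,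
    Finset.mem_range]
  split_ifs with h
  · rfl
  · exact (scaledLaguerreCoeff_of_lt (by omega)).symm

lemma scaledLaguerre_rec (n : ℕ) :
    scaledLaguerre (n + 2) = (X - C (2 * ((n : ℝ) + 2))) * scaledLaguerre (n + 1)
      - C (((n : ℝ) + 2) * (n + 1)) * scaledLaguerre n := by
  ext j
  simp only [sub_mul, coeff_sub, coeff_C_mul, coeff_scaledLaguerre]
  rcases j with _ | j
  · simp [scaledLaguerreCoeff_rec_zero]
  · simp [coeff_X_mul, coeff_scaledLaguerre, scaledLaguerreCoeff_rec_succ]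

lemma eval_scaledLaguerre (n : ℕ) (t : ℝ) :
    (scaledLaguerre n).eval t = ∑ j ∈ Finset.range (n + 1),
      (-1 : ℝ) ^ (n - j) *
        ((n.factorial : ℝ) * ((n + 1).factorial : ℝ) /
          (((n - j).factorial : ℝ) * (j.factorial : ℝ) * ((j + 1).factorial : ℝ))) * t ^ j := by
  simp only [scaledLaguerre, eval_finsetSum, eval_mul, eval_C, eval_pow, eval_X]
  refine Finset.sum_congr rfl fun j hj => ?_
  rw [scaledLaguerreCoeff, if_pos (Finset.mem_range_succ_iff.mp hj)]

/-- The eigenvalue polynomials `V_n` of the 3-dimensional softcore Coulomb problem,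
defined by `V₀ = 1/2`, `V₁(x) = x − 1` and
`V_n(x) = 2(x−n)V_{n−1}(x) − n(n−1)V_{n−2}(x)`, are given explicitly by
`V_n(x) = (1/2) Σ_{j=0}^n (−1)^{n−j} (n!(n+1)!/((n−j)! j! (j+1)!)) (2x)^j`, i.e. `V_n`
is `(−1)^n n!/2` times the associated Laguerre polynomial `L_n^{(1)}` at `2x`. -/
theorem softcore_3d_laguerre
    (V : ℕ → ℝ → ℝ)
    (hV0 : ∀ x : ℝ, V 0 x = 1 / 2)
    (hV1 : ∀ x : ℝ, V 1 x = x - 1)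
    (hVrec : ∀ n : ℕ, 2 ≤ n → ∀ x : ℝ,
      V n x = 2 * (x - (n : ℝ)) * V (n - 1) x - (n : ℝ) * ((n : ℝ) - 1) * V (n - 2) x) :
    ∀ (n : ℕ) (x : ℝ),
      V n x = (1 / 2) * ∑ j ∈ Finset.range (n + 1),
        (-1 : ℝ) ^ (n - j) *
          ((n.factorial : ℝ) * ((n + 1).factorial : ℝ) /
            (((n - j).factorial : ℝ) * (j.factorial : ℝ) * ((j + 1).factorial : ℝ))) *
          (2 * x) ^ j := by
  have hV : ∀ n x, V n x = (scaledLaguerre n).eval (2 * x) / 2 := by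
    intro n
    induction n using Nat.twoStepInduction with
    | zero => simp [hV0, eval_scaledLaguerre]
    | one =>
      intro x
      rw [hV1, eval_scaledLaguerre]
      norm_num [Finset.sum_range_succ]
      ring
    | more n ih₀ ih₁ =>
      intro x
      rw [hVrec (n + 2) le_add_self, show n + 2 - 1 = n + 1 from rfl, Nat.add_sub_cancel, ih₀, ih₁,
        scaledLaguerre_rec]
      simp only [eval_sub, eval_mul, eval_X, eval_C]
      push_cast
      ring
  intro n x
  rw [hV, eval_scaledLaguerre]
  ring
end
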